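/- arXiv:2510.08348 — 9 statements merged into one kernel-verified Lean document; each statement's English description precedes it below -/
import Mathlib

section
/- Let n ≥ 1, x ∈ ℝ^n, and δ ∈ ℝ^n with δ ≥ 0 coordinate-wise and ‖δ‖_∞ ≤ 1. Then smax(x + δ) ≤ smax(x) + 2·⟨∇smax(x), δ⟩, where ∇smax(x)_i = exp(x_i) / ∑_{j=1}^n exp(x_j). -/
lemma exp_le_one_add_two_mul {d : ℝ} (h0 : 0 ≤ d) (h1 : d ≤ 1) :
    Real.exp d ≤ 1 + 2 * d := by
  have hc := convexOn_exp.2 (Set.mem_univ (0:ℝ)) (Set.mem_univ (1:ℝ))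
    (by linarith : (0:ℝ) ≤ 1 - d) h0 (by ring)
  simp only [smul_eq_mul, mul_zero, mul_one, zero_add, Real.exp_zero] at hc
  have he : Real.exp 1 < 2.7182818286 := Real.exp_one_lt_d9
  nlinarith [hc, he]

/-- For `n ≥ 1`, `x, δ ∈ ℝ^n` with `δ ≥ 0` coordinate-wise and `‖δ‖_∞ ≤ 1`,
`smax (x + δ) ≤ smax x + 2 ⟨∇smax x, δ⟩`, where `smax x = log (∑ i, exp (x i))` and
`∇smax(x)_i = exp (x i) / ∑ j, exp (x j)`. -/
theorem smax_growth (n : ℕ) (hn : 1 ≤ n) (x δ : Fin n → ℝ)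
    (hδ0 : ∀ i, 0 ≤ δ i) (hδ1 : ∀ i, δ i ≤ 1) :
    Real.log (∑ i, Real.exp (x i + δ i)) ≤
      Real.log (∑ i, Real.exp (x i)) +
        2 * ∑ i, (Real.exp (x i) / ∑ j, Real.exp (x j)) * δ i := by
  have hne : (Finset.univ : Finset (Fin n)).Nonempty := ⟨⟨0, hn⟩, Finset.mem_univ _⟩
  set S := ∑ i, Real.exp (x i) with hS
  have hSpos : 0 < S := Finset.sum_pos (fun i _ => Real.exp_pos _) hne
  set T := ∑ i, Real.exp (x i) * δ i with hT
  have hT0 : 0 ≤ T := Finset.sum_nonneg fun i _ => mul_nonneg (Real.exp_pos _).le (hδ0 i)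
  have hsum : ∑ i, Real.exp (x i + δ i) ≤ S + 2 * T := by
    have hle : ∀ i ∈ Finset.univ, Real.exp (x i + δ i)
        ≤ Real.exp (x i) * (1 + 2 * δ i) := by
      intro i _
      rw [Real.exp_add]
      exact mul_le_mul_of_nonneg_left (exp_le_one_add_two_mul (hδ0 i) (hδ1 i))
        (Real.exp_pos _).le
    calc ∑ i, Real.exp (x i + δ i) ≤ ∑ i, Real.exp (x i) * (1 + 2 * δ i) :=
          Finset.sum_le_sum hle
      _ = S + 2 * T := by
          rw [hS, hT, Finset.mul_sum, ← Finset.sum_add_distrib]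
          exact Finset.sum_congr rfl fun i _ => by ring
  have hpos : 0 < ∑ i, Real.exp (x i + δ i) :=
    Finset.sum_pos (fun i _ => Real.exp_pos _) hne
  have hgrad : ∑ i, (Real.exp (x i) / S) * δ i = T / S := by
    rw [hT, Finset.sum_div]
    exact Finset.sum_congr rfl fun i _ => by ring
  have h1 : Real.log (∑ i, Real.exp (x i + δ i)) ≤ Real.log (S + 2 * T) :=
    Real.log_le_log hpos hsum
  have h2 : Real.log (S + 2 * T) ≤ Real.log S + 2 * (T / S) := by
    have heq : S + 2 * T = S * (1 + 2 * (T / S)) := by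
      field_simp
    rw [heq, Real.log_mul hSpos.ne' (by positivity)]
    have := Real.log_le_sub_one_of_pos (show (0:ℝ) < 1 + 2 * (T / S) by positivity)
    linarith
  rw [hgrad]
  linarith
end

section
/- Let n ≥ 1, T ≥ 1, ε > 0, and let v_1, …, v_T ∈ {0,1}^n. For each t ∈ [T] define the probability vector p_t ∈ Δ_n by p_t = ∇smax(∑_{τ=1}^{t-1} v_τ), i.e. (p_t)_i = exp(∑_{τ<t} (v_τ)_i) / ∑_{j=1}^n exp(∑_{τ<t} (v_τ)_j). If ⟨p_t, v_t⟩ ≤ ε for every t ∈ [T], then for every coordinate i ∈ [n], (1/T)·∑_{t=1}^T (v_t)_i ≤ (log n)/T + 2ε. In particular, if T ≥ (log n)/ε, then max_{i∈[n]} (1/T)·∑_{t=1}^T (v_t)_i ≤ 3ε. -/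
/-- MWU with 0-1 loss vectors. If `p_t = ∇smax (∑_{τ<t} v_τ)` and
`⟨p_t, v_t⟩ ≤ ε` for every `t`, then every coordinate of `(1/T) ∑_t v_t` is at most
`(log n)/T + 2ε`; in particular at most `3ε` when `T ≥ (log n)/ε`. -/
theorem mwu_binary_losses (n T : ℕ) (hn : 1 ≤ n) (hT : 1 ≤ T) (ε : ℝ) (hε : 0 < ε)
    (v : Fin T → Fin n → ℝ)
    (hv : ∀ t i, v t i = 0 ∨ v t i = 1)
    (p : Fin T → Fin n → ℝ)
    (hp : ∀ t i, p t i =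
      Real.exp (∑ τ ∈ Finset.univ.filter (fun τ => τ < t), v τ i) /
        ∑ j, Real.exp (∑ τ ∈ Finset.univ.filter (fun τ => τ < t), v τ j))
    (hlow : ∀ t, ∑ i, p t i * v t i ≤ ε) :
    (∀ i, (1 / (T : ℝ)) * ∑ t, v t i ≤ Real.log n / T + 2 * ε) ∧
    (Real.log n / ε ≤ (T : ℝ) → ∀ i, (1 / (T : ℝ)) * ∑ t, v t i ≤ 3 * ε) := by
  have hTpos : (0:ℝ) < T := by exact_mod_cast hT
  set W : ℕ → Fin n → ℝ :=
    fun k i => ∑ τ ∈ Finset.univ.filter (fun τ : Fin T => (τ : ℕ) < k), v τ i with hWdef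
  set Z : ℕ → ℝ := fun k => ∑ i, Real.exp (W k i) with hZdef
  have hZpos : ∀ k, 0 < Z k := fun k =>
    Finset.sum_pos (fun i _ => Real.exp_pos _) ⟨⟨0, hn⟩, Finset.mem_univ _⟩
  -- hypothesis filters agree with W
  have hfilt : ∀ t : Fin T,
      (Finset.univ.filter (fun τ : Fin T => τ < t)) =
      (Finset.univ.filter (fun τ : Fin T => (τ : ℕ) < (t : ℕ))) := by
    intro t; exact Finset.filter_congr fun τ _ => Fin.lt_def
  -- one step
  have hstep : ∀ t : Fin T, Z ((t : ℕ) + 1) ≤ Z (t : ℕ) * Real.exp (2 * ε) := by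
    intro t
    have hins : (Finset.univ.filter (fun τ : Fin T => (τ : ℕ) < (t : ℕ) + 1)) =
        insert t (Finset.univ.filter (fun τ : Fin T => (τ : ℕ) < (t : ℕ))) := by
      ext τ
      simp only [Finset.mem_filter, Finset.mem_insert, Finset.mem_univ, true_and,
        Nat.lt_succ_iff, le_iff_lt_or_eq, Fin.ext_iff]
      tauto
    have hWsucc : ∀ i, W ((t : ℕ) + 1) i = W (t : ℕ) i + v t i := by
      intro i
      simp only [hWdef, hins]
      rw [Finset.sum_insert (by simp)]
      ring
    set c : ℝ := Real.exp 1 - 1 with hc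
    have hcnn : 0 ≤ c := by
      rw [hc]; linarith [Real.add_one_le_exp (1:ℝ)]
    have hc2 : c ≤ 2 := by
      rw [hc]; have := Real.exp_one_lt_d9; linarith
    have hexpv : ∀ i, Real.exp (v t i) = 1 + c * v t i := by
      intro i
      rcases hv t i with h | h <;> simp [h, hc] <;> ring
    have hZexp : Z ((t : ℕ) + 1) = Z (t : ℕ) + c * ∑ i, Real.exp (W (t : ℕ) i) * v t i := by
      simp only [hZdef]
      rw [Finset.mul_sum, ← Finset.sum_add_distrib]
      apply Finset.sum_congr rfl
      intro i _
      rw [hWsucc i, Real.exp_add, hexpv i]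
      ring
    have hS0 : 0 ≤ ∑ i, Real.exp (W (t : ℕ) i) * v t i := by
      apply Finset.sum_nonneg
      intro i _
      rcases hv t i with h | h <;> simp [h] <;> positivity
    have hSε : ∑ i, Real.exp (W (t : ℕ) i) * v t i ≤ ε * Z (t : ℕ) := by
      have h := hlow t
      have hps : ∑ i, p t i * v t i =
          (∑ i, Real.exp (W (t : ℕ) i) * v t i) / Z (t : ℕ) := by
        rw [Finset.sum_div]
        apply Finset.sum_congr rfl
        intro i _
        rw [hp t i]
        simp only [hfilt t, hWdef, hZdef]
        ring
      rw [hps, div_le_iff₀ (hZpos _)] at h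
      linarith
    calc Z ((t : ℕ) + 1) = Z (t : ℕ) + c * ∑ i, Real.exp (W (t : ℕ) i) * v t i := hZexp
      _ ≤ Z (t : ℕ) + 2 * (ε * Z (t : ℕ)) := by
          have h1 : c * ∑ i, Real.exp (W (t : ℕ) i) * v t i ≤
              2 * ∑ i, Real.exp (W (t : ℕ) i) * v t i := by nlinarith
          nlinarith
      _ = Z (t : ℕ) * (2 * ε + 1) := by ring
      _ ≤ Z (t : ℕ) * Real.exp (2 * ε) := by
          have := Real.add_one_le_exp (2 * ε)
          nlinarith [hZpos (t : ℕ)]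
  -- induction
  have hind : ∀ k, k ≤ T → Z k ≤ Z 0 * Real.exp (2 * ε * k) := by
    intro k
    induction k with
    | zero => intro _; simp
    | succ m ih =>
      intro hm
      have hmT : m < T := hm
      have h1 := hstep ⟨m, hmT⟩
      simp only [] at h1
      have h2 := ih (le_of_lt hmT)
      have hcast : ((m + 1 : ℕ) : ℝ) = (m : ℝ) + 1 := by push_cast; ring
      rw [hcast]
      calc Z (m + 1) ≤ Z m * Real.exp (2 * ε) := h1
        _ ≤ Z 0 * Real.exp (2 * ε * m) * Real.exp (2 * ε) := by
            nlinarith [Real.exp_pos (2 * ε), Real.exp_pos (2 * ε * m)]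
        _ = Z 0 * Real.exp (2 * ε * ((m : ℝ) + 1)) := by
            rw [mul_assoc, ← Real.exp_add]; ring_nf
  have hZ0 : Z 0 = n := by
    simp [hZdef, hWdef]
  -- main bound
  have main : ∀ i, (1 / (T : ℝ)) * ∑ t, v t i ≤ Real.log n / T + 2 * ε := by
    intro i
    have hWT : W T i = ∑ t, v t i := by
      simp only [hWdef]
      apply Finset.sum_congr _ (fun _ _ => rfl)
      simp [Finset.filter_true_of_mem, Fin.is_lt]
    have h1 : Real.exp (W T i) ≤ Z T := by
      exact Finset.single_le_sum (fun j _ => le_of_lt (Real.exp_pos _)) (Finset.mem_univ i)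
    have h2 : Z T ≤ (n : ℝ) * Real.exp (2 * ε * T) := by
      have := hind T le_rfl
      rwa [hZ0] at this
    have h3 : Real.exp (W T i) ≤ (n : ℝ) * Real.exp (2 * ε * T) := h1.trans h2
    have hnpos : (0:ℝ) < n := by exact_mod_cast hn
    have h4 : W T i ≤ Real.log n + 2 * ε * T := by
      have := Real.log_le_log (Real.exp_pos _) h3
      rw [Real.log_exp, Real.log_mul (ne_of_gt hnpos) (ne_of_gt (Real.exp_pos _)),
        Real.log_exp] at this
      exact this
    rw [← hWT]
    calc (1 / (T : ℝ)) * W T i ≤ (1 / (T : ℝ)) * (Real.log n + 2 * ε * T) := by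
          apply mul_le_mul_of_nonneg_left h4 (by positivity)
      _ = Real.log n / T + 2 * ε := by field_simp
  refine ⟨main, fun hratio i => ?_⟩
  have hlogn : 0 ≤ Real.log n := Real.log_natCast_nonneg n
  have h5 : Real.log n / T ≤ ε := by
    rw [div_le_iff₀ hTpos]
    rw [div_le_iff₀ hε] at hratio
    linarith
  have := main i
  linarith
end

section
/- Let A ∈ ℝ^{n×d} with n ≥ 1, b ∈ ℝ^n, ε ≥ 0, μ > 0, and let x_1, …, x_T ∈ ℝ^d with T ≥ 3·(log n)/μ. For each t define the violation indicator vector v^ε(x_t) ∈ {0,1}^n by v^ε_i(x_t) = 1 if ⟨A_{i:}, x_t⟩ > b_i + ε and 0 otherwise, and define p_t ∈ Δ_n by (p_t)_i = exp(∑_{τ<t} v^ε_i(x_τ)) / ∑_{j=1}^n exp(∑_{τ<t} v^ε_j(x_τ)). If ⟨p_t, v^ε(x_t)⟩ ≤ μ/3 for every t ∈ [T], then for every constraint i ∈ [n] the number of indices t ∈ [T] with ⟨A_{i:}, x_t⟩ > b_i + ε is at most μ·T. -/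
/-- MWU over constraint-violation indicator vectors. If the weights are
`p_t ∝ exp (∑_{τ<t} v^ε(x_τ))` and each iterate has low violation weight
`⟨p_t, v^ε(x_t)⟩ ≤ μ/3`, with `T ≥ 3 (log n)/μ`, then every constraint is violated
(at level `ε`) by at most `μ T` of the iterates. -/
theorem mwu_low_violation_sequence (n d T : ℕ) (hn : 1 ≤ n)
    (A : Matrix (Fin n) (Fin d) ℝ) (b : Fin n → ℝ)
    (ε μ : ℝ) (hε : 0 ≤ ε) (hμ : 0 < μ)
    (hT : 3 * Real.log n / μ ≤ (T : ℝ))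
    (x : Fin T → Fin d → ℝ)
    (v : Fin T → Fin n → ℝ)
    (hv : ∀ t i, v t i = if b i + ε < ∑ j, A i j * x t j then 1 else 0)
    (p : Fin T → Fin n → ℝ)
    (hp : ∀ t i, p t i =
      Real.exp (∑ τ ∈ Finset.univ.filter (fun τ => τ < t), v τ i) /
        ∑ j, Real.exp (∑ τ ∈ Finset.univ.filter (fun τ => τ < t), v τ j))
    (hlow : ∀ t, ∑ i, p t i * v t i ≤ μ / 3) :
    ∀ i, ((Finset.univ.filter (fun t => b i + ε < ∑ j, A i j * x t j)).card : ℝ) ≤ μ * T := by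
  haveI : Nonempty (Fin n) := Fin.pos_iff_nonempty.mp hn
  set c : ℝ := (Real.exp 1 - 1) * (μ / 3) with hc
  set S : ℕ → Fin n → ℝ := fun m j =>
    ∑ τ ∈ Finset.univ.filter (fun τ : Fin T => (τ : ℕ) < m), v τ j with hSdef
  set W : ℕ → ℝ := fun m => ∑ j, Real.exp (S m j) with hWdef
  have hv01 : ∀ t j, v t j = 0 ∨ v t j = 1 := by
    intro t j; rw [hv]; split <;> simp
  have hWpos : ∀ m, 0 < W m := fun m =>
    Finset.sum_pos (fun j _ => Real.exp_pos _) Finset.univ_nonempty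
  have key : ∀ m : ℕ, (hm : m < T) → W (m + 1) ≤ W m * Real.exp c := by
    intro m hm
    set t : Fin T := ⟨m, hm⟩ with ht
    have hfil : Finset.univ.filter (fun τ : Fin T => (τ : ℕ) < m + 1) =
        insert t (Finset.univ.filter (fun τ : Fin T => (τ : ℕ) < m)) := by
      ext τ
      simp only [Finset.mem_filter, Finset.mem_univ, true_and, Finset.mem_insert,
        Fin.ext_iff, ht]
      omega
    have htnot : t ∉ Finset.univ.filter (fun τ : Fin T => (τ : ℕ) < m) := by
      simp [ht]
    have hSsucc : ∀ j, S (m + 1) j = v t j + S m j := by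
      intro j
      simp only [hSdef, hfil, Finset.sum_insert htnot]
    -- weight identity from hlow
    have hfil2 : Finset.univ.filter (fun τ : Fin T => τ < t) =
        Finset.univ.filter (fun τ : Fin T => (τ : ℕ) < m) := by
      ext τ; simp [Fin.lt_def, ht]
    have hsum : ∑ j, Real.exp (S m j) * v t j ≤ W m * (μ / 3) := by
      have h1 := hlow t
      have h2 : ∑ j, p t j * v t j = (∑ j, Real.exp (S m j) * v t j) / W m := by
        rw [Finset.sum_div]
        refine Finset.sum_congr rfl fun j _ => ?_
        rw [hp, hfil2]
        ring
      rw [h2, div_le_iff₀ (hWpos m)] at h1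
      linarith [h1]
    have hWsucc : W (m + 1) = W m + (Real.exp 1 - 1) * ∑ j, Real.exp (S m j) * v t j := by
      have : ∀ j, Real.exp (S (m + 1) j) =
          Real.exp (S m j) + (Real.exp 1 - 1) * (Real.exp (S m j) * v t j) := by
        intro j
        rw [hSsucc j, Real.exp_add]
        rcases hv01 t j with h | h <;> rw [h] <;> simp <;> ring
      simp only [hWdef, this, Finset.sum_add_distrib, Finset.mul_sum]
    have hexp1 : (0:ℝ) ≤ Real.exp 1 - 1 := by
      have h := Real.one_le_exp (by norm_num : (0:ℝ) ≤ 1)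
      linarith
    calc W (m + 1) = W m + (Real.exp 1 - 1) * ∑ j, Real.exp (S m j) * v t j := hWsucc
      _ ≤ W m + (Real.exp 1 - 1) * (W m * (μ / 3)) := by
          nlinarith [hsum, hWpos m]
      _ = W m * (1 + c) := by rw [hc]; ring
      _ ≤ W m * Real.exp c := by
          have := Real.add_one_le_exp c
          nlinarith [hWpos m]
  have hW0 : W 0 = n := by
    simp [hWdef, hSdef]
  have hWT : ∀ m ≤ T, W m ≤ n * Real.exp (c * m) := by
    intro m hmT
    induction m with
    | zero => simp [hW0]
    | succ k ih =>
      have hk : k < T := hmT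
      calc W (k + 1) ≤ W k * Real.exp c := key k hk
        _ ≤ n * Real.exp (c * k) * Real.exp c := by
            have := ih (le_of_lt hk)
            nlinarith [Real.exp_pos c, this]
        _ = n * Real.exp (c * (k + 1 : ℕ)) := by
            rw [mul_assoc, ← Real.exp_add]; push_cast; ring_nf
  -- now finish
  intro i
  have hcard : ((Finset.univ.filter (fun t => b i + ε < ∑ j, A i j * x t j)).card : ℝ)
      = S T i := by
    have hfilT : Finset.univ.filter (fun τ : Fin T => (τ : ℕ) < T) = Finset.univ := by
      ext τ; simp [τ.isLt]
    rw [hSdef]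
    simp only [hfilT]
    rw [Finset.card_filter]
    push_cast
    refine Finset.sum_congr rfl fun t _ => ?_
    rw [hv]
  have hle : Real.exp (S T i) ≤ W T :=
    Finset.single_le_sum (fun j _ => (Real.exp_pos _).le) (Finset.mem_univ i)
  have hWTbound := hWT T le_rfl
  have hnpos : (0:ℝ) < n := by exact_mod_cast hn
  have hlog : S T i ≤ Real.log n + c * T := by
    have h2 : Real.exp (S T i) ≤ Real.exp (Real.log n + c * T) := by
      rw [Real.exp_add, Real.exp_log hnpos]
      exact hle.trans hWTbound
    exact Real.exp_le_exp.mp h2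
  rw [hcard]
  have hlogn : 3 * Real.log n ≤ μ * T := by
    have := (div_le_iff₀ hμ).mp hT
    linarith
  have he3 : Real.exp 1 ≤ 3 := by
    have := Real.exp_one_lt_d9
    linarith
  have hT0 : (0:ℝ) ≤ T := Nat.cast_nonneg T
  rw [hc] at hlog
  have h4 : (0:ℝ) ≤ (3 - Real.exp 1) * μ * (T : ℝ) :=
    mul_nonneg (mul_nonneg (by linarith) hμ.le) hT0
  nlinarith [hlog, hlogn, h4]
end

section
/- Let A ∈ ℝ^{n×d}, b ∈ ℝ^n, c ∈ ℝ^d, OPT ∈ ℝ, ε > 0, V_max > 0, T ≥ 1, and let x_1, …, x_T ∈ ℝ^d satisfy: (i) ⟨A_{i:}, x_j⟩ − b_i ≤ V_max for all i ∈ [n] and j ∈ [T]; (ii) ⟨c, x_j⟩ ≥ OPT for all j ∈ [T]; (iii) for every constraint i ∈ [n], the number of indices j ∈ [T] with ⟨A_{i:}, x_j⟩ > b_i + ε is at most (ε/V_max)·T. Then the average x̄ = (1/T)·∑_{j=1}^T x_j satisfies ⟨A_{i:}, x̄⟩ ≤ b_i + 2ε for every i ∈ [n], and ⟨c, x̄⟩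 ≥ OPT. -/
/-- If each iterate's violations are bounded by `V_max`, each iterate has
objective value at least `OPT`, and each constraint is violated (at level `ε`) by at most
`(ε/V_max)·T` iterates, then the average iterate is a `2ε`-approximation. -/
theorem average_is_eps_approx (n d T : ℕ) (hT : 1 ≤ T)
    (A : Matrix (Fin n) (Fin d) ℝ) (b : Fin n → ℝ) (c : Fin d → ℝ)
    (OPT ε Vmax : ℝ) (hε : 0 < ε) (hV : 0 < Vmax)
    (x : Fin T → Fin d → ℝ)
    (h1 : ∀ i j, (∑ k, A i k * x j k) - b i ≤ Vmax)
    (h2 : ∀ j, OPT ≤ ∑ k, c k * x j k)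
    (h3 : ∀ i, ((Finset.univ.filter (fun j => b i + ε < ∑ k, A i k * x j k)).card : ℝ)
      ≤ (ε / Vmax) * T) :
    (∀ i, ∑ k, A i k * ((1 / (T : ℝ)) * ∑ j, x j k) ≤ b i + 2 * ε) ∧
    OPT ≤ ∑ k, c k * ((1 / (T : ℝ)) * ∑ j, x j k) := by
  have hTpos : (0:ℝ) < T := by exact_mod_cast hT
  have swap : ∀ (v : Fin d → ℝ),
      ∑ k, v k * ((1 / (T : ℝ)) * ∑ j, x j k)
        = (1 / (T : ℝ)) * ∑ j, ∑ k, v k * x j k := by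
    intro v
    calc ∑ k, v k * ((1 / (T : ℝ)) * ∑ j, x j k)
        = ∑ k, ∑ j, (1 / (T : ℝ)) * (v k * x j k) := by
          simp only [Finset.mul_sum]
          exact Finset.sum_congr rfl fun k _ => Finset.sum_congr rfl fun j _ => by ring
      _ = ∑ j, ∑ k, (1 / (T : ℝ)) * (v k * x j k) := Finset.sum_comm
      _ = (1 / (T : ℝ)) * ∑ j, ∑ k, v k * x j k := by
          rw [Finset.mul_sum]
          exact Finset.sum_congr rfl fun j _ => by rw [Finset.mul_sum]
  constructor
  · intro i
    rw [swap (A i)]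
    set f : Fin T → ℝ := fun j => ∑ k, A i k * x j k with hf
    have key : ∑ j, f j ≤ (T : ℝ) * (b i + 2 * ε) := by
      set S := Finset.univ.filter (fun j => b i + ε < f j) with hS
      have hsplit : ∑ j, f j = ∑ j ∈ S, f j + ∑ j ∈ Sᶜ, f j :=
        (Finset.sum_add_sum_compl S f).symm
      have hSb : ∑ j ∈ S, f j ≤ (S.card : ℝ) * (b i + Vmax) := by
        calc ∑ j ∈ S, f j ≤ ∑ _j ∈ S, (b i + Vmax) := by
              apply Finset.sum_le_sum
              intro j _
              have := h1 i j
              linarith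
          _ = (S.card : ℝ) * (b i + Vmax) := by
              rw [Finset.sum_const, nsmul_eq_mul]
      have hScb : ∑ j ∈ Sᶜ, f j ≤ (Sᶜ.card : ℝ) * (b i + ε) := by
        calc ∑ j ∈ Sᶜ, f j ≤ ∑ _j ∈ Sᶜ, (b i + ε) := by
              apply Finset.sum_le_sum
              intro j hj
              have hj' : ¬ (b i + ε < f j) := by
                simp only [hS, Finset.mem_compl, Finset.mem_filter, Finset.mem_univ,
                  true_and] at hj
                exact hj
              linarith [not_lt.mp hj']
          _ = (Sᶜ.card : ℝ) * (b i + ε) := by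
              rw [Finset.sum_const, nsmul_eq_mul]
      have hcard : (S.card : ℝ) + (Sᶜ.card : ℝ) = (T : ℝ) := by
        have := Finset.card_add_card_compl S
        simp only [Finset.card_univ, Fintype.card_fin] at this
        exact_mod_cast this
      have hS3 : (S.card : ℝ) ≤ (ε / Vmax) * T := h3 i
      have hScard0 : (0:ℝ) ≤ (S.card : ℝ) := Nat.cast_nonneg _
      have hterm : (S.card : ℝ) * (Vmax - ε) ≤ ε * T := by
        rcases le_or_gt Vmax ε with h | h
        · have : (S.card : ℝ) * (Vmax - ε) ≤ 0 :=
            mul_nonpos_of_nonneg_of_nonpos hScard0 (by linarith)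
          nlinarith
        · have h1' : (S.card : ℝ) * (Vmax - ε) ≤ ((ε / Vmax) * T) * (Vmax - ε) :=
            mul_le_mul_of_nonneg_right hS3 (by linarith)
          have h2' : ((ε / Vmax) * T) * (Vmax - ε) ≤ ε * T := by
            rw [div_mul_eq_mul_div, div_mul_eq_mul_div, div_le_iff₀ hV]
            nlinarith [mul_nonneg (mul_nonneg hε.le hTpos.le) hε.le]
          linarith
      have e : (S.card : ℝ) * (b i + Vmax) + (Sᶜ.card : ℝ) * (b i + ε)
          = (T : ℝ) * (b i + ε) + (S.card : ℝ) * (Vmax - ε) := by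
        rw [← hcard]; ring
      rw [hsplit]
      linarith
    have hmul : (1 / (T : ℝ)) * ∑ j, f j ≤ (1 / (T : ℝ)) * ((T : ℝ) * (b i + 2 * ε)) :=
      mul_le_mul_of_nonneg_left key (by positivity)
    have hc : (1 / (T : ℝ)) * ((T : ℝ) * (b i + 2 * ε)) = b i + 2 * ε := by
      field_simp
    linarith
  · rw [swap c]
    have key : (T : ℝ) * OPT ≤ ∑ j, ∑ k, c k * x j k := by
      calc (T : ℝ) * OPT = ∑ _j : Fin T, OPT := by
            rw [Finset.sum_const, nsmul_eq_mul, Finset.card_univ, Fintype.card_fin]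
        _ ≤ ∑ j, ∑ k, c k * x j k := Finset.sum_le_sum (fun j _ => h2 j)
    have hmul : (1 / (T : ℝ)) * ((T : ℝ) * OPT) ≤ (1 / (T : ℝ)) * ∑ j, ∑ k, c k * x j k :=
      mul_le_mul_of_nonneg_left key (by positivity)
    have hc : (1 / (T : ℝ)) * ((T : ℝ) * OPT) = OPT := by field_simp
    linarith
end

section
/- (Clarkson's sampling lemma.) Let A ∈ ℝ^{n×d}, b ∈ ℝ^n, let p ∈ Δ_n be a probability vector, let r > 0, and let x* be a map assigning to every subset Q ⊆ [n] a vector x*(Q) ∈ ℝ^d such that: (i) for every Q and every i ∈ Q, ⟨A_{i:}, x*(Q)⟩ ≤ b_i; and (ii) for every Q there exists a set B(Q) ⊆ Q with |B(Q)| ≤ d such that x*(Q \ {i}) = x*(Q) for every i ∈ Q \ B(Q). Let q ∈ [0,1]^n satisfy q_i ≥ min{r·p_i, 1} for all i, and let the random subset S ⊆ [n] be generated by including each i ∈ [n] independently with probability q_i (i.e., S = {i : ω_i = 1} where ω is drawn from the product of Bernoulli(q_i) measures on {0,1}^n). Then E[ ∑_{i ∈ [n] : ⟨A_{i:}, x*(S)⟩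 > b_i} p_i ] ≤ d/r. -/
/-- The product-Bernoulli weight of a sample `S`. -/
def clarksonMu {n : ℕ} (q : Fin n → ℝ) (S : Finset (Fin n)) : ℝ :=
  (∏ i ∈ S, q i) * ∏ i ∈ Sᶜ, (1 - q i)

lemma clarksonMu_nonneg {n : ℕ} (q : Fin n → ℝ) (hq0 : ∀ i, 0 ≤ q i)
    (hq1 : ∀ i, q i ≤ 1) (S : Finset (Fin n)) : 0 ≤ clarksonMu q S :=
  mul_nonneg (Finset.prod_nonneg fun i _ => hq0 i)
    (Finset.prod_nonneg fun i _ => by linarith [hq1 i])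

lemma clarksonMu_sum_one {n : ℕ} (q : Fin n → ℝ) :
    ∑ S : Finset (Fin n), clarksonMu q S = 1 := by
  have h := Finset.prod_add q (fun i => 1 - q i) (Finset.univ : Finset (Fin n))
  have h1 : ∏ i : Fin n, (q i + (1 - q i)) = 1 :=
    Finset.prod_eq_one fun i _ => by ring
  rw [h1, Finset.powerset_univ] at h
  unfold clarksonMu
  simp only [Finset.compl_eq_univ_sdiff]
  exact h.symm

lemma clarksonMu_insert {n : ℕ} (q : Fin n → ℝ) {S : Finset (Fin n)} {i : Fin n}
    (hi : i ∉ S) : clarksonMu q S * q i = (1 - q i) * clarksonMu q (insert i S) := by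
  unfold clarksonMu
  rw [Finset.compl_insert, Finset.prod_insert hi,
    ← Finset.mul_prod_erase Sᶜ (fun j => 1 - q j) (Finset.mem_compl.2 hi)]
  ring

/-- Clarkson's sampling lemma: sampling each constraint `i` independently
with probability `q i ≥ min (r * p i) 1` and solving exactly on the sample `S` (via the
abstract solver `xstar`, which is feasible on its input and determined by a basis of at
most `d` constraints), the expected total `p`-weight of violated constraints is at most
`d / r`.  The expectation is written explicitly as a sum over all subsets `S ⊆ [n]`
weighted by the product Bernoulli probabilities. -/
theorem clarkson_sampling_lemma (n d : ℕ)
    (A : Matrix (Fin n) (Fin d) ℝ) (b : Fin n → ℝ)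
    (p : Fin n → ℝ) (hp0 : ∀ i, 0 ≤ p i) (hp1 : ∑ i, p i = 1)
    (r : ℝ) (hr : 0 < r)
    (xstar : Finset (Fin n) → Fin d → ℝ)
    (hfeas : ∀ Q : Finset (Fin n), ∀ i ∈ Q, ∑ k, A i k * xstar Q k ≤ b i)
    (hbasis : ∀ Q : Finset (Fin n), ∃ B ⊆ Q, B.card ≤ d ∧
      ∀ i ∈ Q \ B, xstar (Q.erase i) = xstar Q)
    (q : Fin n → ℝ) (hq0 : ∀ i, 0 ≤ q i) (hq1 : ∀ i, q i ≤ 1)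
    (hq : ∀ i, min (r * p i) 1 ≤ q i) :
    ∑ S : Finset (Fin n),
      ((∏ i ∈ S, q i) * ∏ i ∈ Sᶜ, (1 - q i)) *
        ∑ i ∈ Finset.univ.filter (fun i => b i < ∑ k, A i k * xstar S k), p i
      ≤ (d : ℝ) / r := by
  classical
  have hμ0 : ∀ S, 0 ≤ clarksonMu q S := clarksonMu_nonneg q hq0 hq1
  have hviol_notMem : ∀ (S : Finset (Fin n)) (i : Fin n),
      b i < ∑ k, A i k * xstar S k → i ∉ S := fun S i h hi =>
    absurd (hfeas S i hi) (not_le.2 h)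
  rw [le_div_iff₀ hr]
  show (∑ S : Finset (Fin n), clarksonMu q S *
      ∑ i ∈ Finset.univ.filter (fun i => b i < ∑ k, A i k * xstar S k), p i) * r
    ≤ (d : ℝ)
  calc (∑ S : Finset (Fin n), clarksonMu q S *
          ∑ i ∈ Finset.univ.filter (fun i => b i < ∑ k, A i k * xstar S k), p i) * r
      = ∑ S : Finset (Fin n),
          ∑ i ∈ Finset.univ.filter (fun i => b i < ∑ k, A i k * xstar S k),
            clarksonMu q S * (r * p i) := by
        rw [Finset.sum_mul]
        refine Finset.sum_congr rfl fun S _ => ?_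
        rw [Finset.mul_sum, Finset.sum_mul]
        exact Finset.sum_congr rfl fun i _ => by ring
    _ ≤ ∑ S : Finset (Fin n),
          ∑ i ∈ Finset.univ.filter (fun i => b i < ∑ k, A i k * xstar S k),
            clarksonMu q S * q i := by
        refine Finset.sum_le_sum fun S _ => Finset.sum_le_sum fun i hi => ?_
        rw [Finset.mem_filter] at hi
        have hiS : i ∉ S := hviol_notMem S i hi.2
        rcases le_or_gt (r * p i) 1 with h | h
        · have hle : r * p i ≤ q i := by
            have := hq i; rwa [min_eq_left h] at this
          exact mul_le_mul_of_nonneg_left hle (hμ0 S)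
        · have hq1' : q i = 1 := le_antisymm (hq1 i) (by
            have := hq i; rwa [min_eq_right h.le] at this)
          have hμz : clarksonMu q S = 0 := by
            unfold clarksonMu
            rw [Finset.prod_eq_zero (Finset.mem_compl.2 hiS)
              (by rw [hq1']; ring), mul_zero]
          rw [hμz, zero_mul, zero_mul]
    _ ≤ ∑ S : Finset (Fin n),
          ∑ i ∈ Finset.univ.filter (fun i => b i < ∑ k, A i k * xstar S k),
            clarksonMu q (insert i S) := by
        refine Finset.sum_le_sum fun S _ => Finset.sum_le_sum fun i hi => ?_
        rw [Finset.mem_filter] at hi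
        have hiS : i ∉ S := hviol_notMem S i hi.2
        calc clarksonMu q S * q i = (1 - q i) * clarksonMu q (insert i S) :=
              clarksonMu_insert q hiS
          _ ≤ 1 * clarksonMu q (insert i S) :=
              mul_le_mul_of_nonneg_right (by linarith [hq0 i]) (hμ0 _)
          _ = clarksonMu q (insert i S) := one_mul _
    _ = ∑ i : Fin n,
          ∑ S ∈ Finset.univ.filter (fun S => b i < ∑ k, A i k * xstar S k),
            clarksonMu q (insert i S) := by
        simp only [Finset.sum_filter]
        exact Finset.sum_comm
    _ ≤ ∑ i : Fin n,
          ∑ Q ∈ Finset.univ.filter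
              (fun Q => i ∈ Q ∧ b i < ∑ k, A i k * xstar (Q.erase i) k),
            clarksonMu q Q := by
        refine Finset.sum_le_sum fun i _ => ?_
        have hinj : ∀ S₁ ∈ Finset.univ.filter
            (fun S => b i < ∑ k, A i k * xstar S k), ∀ S₂ ∈ Finset.univ.filter
            (fun S => b i < ∑ k, A i k * xstar S k),
            insert i S₁ = insert i S₂ → S₁ = S₂ := by
          intro S₁ h₁ S₂ h₂ h
          rw [Finset.mem_filter] at h₁ h₂
          have e₁ : i ∉ S₁ := hviol_notMem S₁ i h₁.2
          have e₂ : i ∉ S₂ := hviol_notMem S₂ i h₂.2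
          rw [← Finset.erase_insert e₁, ← Finset.erase_insert e₂, h]
        rw [← Finset.sum_image hinj]
        apply Finset.sum_le_sum_of_subset_of_nonneg
        · intro Q hQ
          simp only [Finset.mem_image, Finset.mem_filter] at hQ ⊢
          obtain ⟨S, ⟨-, hS⟩, rfl⟩ := hQ
          have hiS : i ∉ S := hviol_notMem S i hS
          refine ⟨Finset.mem_univ _, Finset.mem_insert_self i S, ?_⟩
          rwa [Finset.erase_insert hiS]
        · intro Q _ _; exact hμ0 Q
    _ = ∑ Q : Finset (Fin n), clarksonMu q Q *
          ((Finset.univ.filter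
            (fun i => i ∈ Q ∧ b i < ∑ k, A i k * xstar (Q.erase i) k)).card : ℝ) := by
        simp only [Finset.sum_filter]
        rw [Finset.sum_comm]
        refine Finset.sum_congr rfl fun Q _ => ?_
        rw [← Finset.sum_filter, Finset.sum_const, nsmul_eq_mul, mul_comm]
    _ ≤ ∑ Q : Finset (Fin n), clarksonMu q Q * (d : ℝ) := by
        refine Finset.sum_le_sum fun Q _ => ?_
        refine mul_le_mul_of_nonneg_left ?_ (hμ0 Q)
        obtain ⟨B, hBQ, hBd, hB⟩ := hbasis Q
        have hsub : Finset.univ.filter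
            (fun i => i ∈ Q ∧ b i < ∑ k, A i k * xstar (Q.erase i) k) ⊆ B := by
          intro i hi
          rw [Finset.mem_filter] at hi
          obtain ⟨-, hiQ, hviol⟩ := hi
          by_contra hiB
          rw [hB i (Finset.mem_sdiff.2 ⟨hiQ, hiB⟩)] at hviol
          exact absurd (hfeas Q i hiQ) (not_le.2 hviol)
        exact_mod_cast (Finset.card_le_card hsub).trans hBd
    _ = (d : ℝ) := by rw [← Finset.sum_mul, clarksonMu_sum_one, one_mul]
end

section
/- Let A ∈ ℝ^{n×d}, b ∈ ℝ^n, ε ≥ 0, μ > 0, N ≥ 1 and n ≥ 1. Let X ⊆ ℝ^d be a finite set of candidate solutions with |X| ≤ N, let p ∈ Δ_n, and set r = log(N·n)/μ. Let q ∈ [0,1]^n satisfy q_i ≥ min{r·p_i, 1} for all i, and let the random subset S ⊆ [n] include each i ∈ [n] independently with probability q_i (product Bernoulli measure). Then, with probability at least 1 − 1/n, the following holds: every x ∈ X with ∑_{i : ⟨A_{i:},x⟩ > b_i + ε} p_i > μ violates at least one sampled constraint, i.e., there exists i ∈ S with ⟨A_{i:}, x⟩ > b_i + ε. -/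
open scoped Classical

lemma aux_sum_biUnion_le {α β : Type*} [DecidableEq β] (s : Finset α) (t : α → Finset β)
    (f : β → ℝ) (hf : ∀ b, 0 ≤ f b) :
    ∑ b ∈ s.biUnion t, f b ≤ ∑ a ∈ s, ∑ b ∈ t a, f b := by
  classical
  induction s using Finset.induction with
  | empty => simp
  | @insert a s hx ih =>
    rw [Finset.biUnion_insert, Finset.sum_insert hx]
    have h1 : ∑ b ∈ (t a ∪ s.biUnion t), f b + ∑ b ∈ (t a ∩ s.biUnion t), f b
        = ∑ b ∈ t a, f b + ∑ b ∈ s.biUnion t, f b := Finset.sum_union_inter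
    have h2 : 0 ≤ ∑ b ∈ (t a ∩ s.biUnion t), f b :=
      Finset.sum_nonneg fun b _ => hf b
    linarith

/-- sampling each constraint independently with probability
`q i ≥ min (r * p i) 1`, where `r = log (N n) / μ`, with probability at least `1 - 1/n`
(over the product Bernoulli measure, written as an explicit sum over subsets) every
candidate `x ∈ X` whose violated constraints have total `p`-weight more than `μ`
violates some sampled constraint. -/
theorem sampled_constraints_catch_heavy_violators (n d N : ℕ) (hn : 1 ≤ n) (hN : 1 ≤ N)
    (A : Matrix (Fin n) (Fin d) ℝ) (b : Fin n → ℝ)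
    (ε μ : ℝ) (hε : 0 ≤ ε) (hμ : 0 < μ)
    (X : Finset (Fin d → ℝ)) (hX : X.card ≤ N)
    (p : Fin n → ℝ) (hp0 : ∀ i, 0 ≤ p i) (hp1 : ∑ i, p i = 1)
    (r : ℝ) (hr : r = Real.log ((N : ℝ) * n) / μ)
    (q : Fin n → ℝ) (hq0 : ∀ i, 0 ≤ q i) (hq1 : ∀ i, q i ≤ 1)
    (hq : ∀ i, min (r * p i) 1 ≤ q i) :
    1 - 1 / (n : ℝ) ≤
      ∑ S ∈ Finset.univ.filter (fun S : Finset (Fin n) =>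
          ∀ x ∈ X,
            μ < (∑ i ∈ Finset.univ.filter (fun i => b i + ε < ∑ k, A i k * x k), p i) →
              ∃ i ∈ S, b i + ε < ∑ k, A i k * x k),
        ((∏ i ∈ S, q i) * ∏ i ∈ Sᶜ, (1 - q i)) := by
  classical
  set w : Finset (Fin n) → ℝ := fun S => (∏ i ∈ S, q i) * ∏ i ∈ Sᶜ, (1 - q i) with hw
  set V : (Fin d → ℝ) → Finset (Fin n) :=
    fun x => Finset.univ.filter (fun i => b i + ε < ∑ k, A i k * x k) with hV
  set P : Finset (Fin n) → Prop :=
    fun S => ∀ x ∈ X, μ < (∑ i ∈ V x, p i) → ∃ i ∈ S, b i + ε < ∑ k, A i k * x k with hP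
  have hw0 : ∀ S, 0 ≤ w S := fun S =>
    mul_nonneg (Finset.prod_nonneg fun i _ => hq0 i)
      (Finset.prod_nonneg fun i _ => by linarith [hq1 i])
  -- positivity facts
  have hNn : (1 : ℝ) ≤ (N : ℝ) * n := by
    have h1 : (1:ℝ) ≤ (N:ℝ) := by exact_mod_cast hN
    have h2 : (1:ℝ) ≤ (n:ℝ) := by exact_mod_cast hn
    nlinarith
  have hNnpos : (0 : ℝ) < (N : ℝ) * n := by linarith
  have hr0 : 0 ≤ r := by
    rw [hr]
    exact div_nonneg (Real.log_nonneg hNn) hμ.le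
  -- total mass is 1
  have htot : ∑ S : Finset (Fin n), w S = 1 := by
    have h := Fintype.prod_add q (fun i => 1 - q i)
    simp only [add_sub_cancel, Finset.prod_const_one] at h
    simp only [hw]
    exact h.symm
  -- conditional sum over subsets of V'ᶜ
  have hcond : ∀ V' : Finset (Fin n),
      ∑ S ∈ (V'ᶜ).powerset, w S = ∏ i ∈ V', (1 - q i) := by
    intro V'
    have key : ∀ S ∈ (V'ᶜ).powerset,
        w S = ((∏ i ∈ S, q i) * ∏ i ∈ V'ᶜ \ S, (1 - q i)) * ∏ i ∈ V', (1 - q i) := by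
      intro S hS
      have hSsub : S ⊆ V'ᶜ := Finset.mem_powerset.mp hS
      have hU : Sᶜ = (V'ᶜ \ S) ∪ V' := by
        ext i
        simp only [Finset.mem_compl, Finset.mem_sdiff, Finset.mem_union]
        constructor
        · intro hi
          by_cases h : i ∈ V'
          · exact Or.inr h
          · exact Or.inl ⟨h, hi⟩
        · rintro (⟨h1, h2⟩ | h)
          · exact h2
          · intro hiS
            exact (Finset.mem_compl.mp (hSsub hiS)) h
      have hdisj : Disjoint (V'ᶜ \ S) V' := by
        refine Finset.disjoint_left.mpr ?_
        intro i hi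
        exact Finset.mem_compl.mp (Finset.mem_sdiff.mp hi).1
      simp only [hw]
      rw [hU, Finset.prod_union hdisj]
      ring
    rw [Finset.sum_congr rfl key, ← Finset.sum_mul]
    have : ∑ S ∈ (V'ᶜ).powerset, (∏ i ∈ S, q i) * ∏ i ∈ V'ᶜ \ S, (1 - q i) = 1 := by
      rw [← Finset.prod_add q (fun i => 1 - q i) (V'ᶜ)]
      exact Finset.prod_eq_one fun i _ => by ring
    rw [this, one_mul]
  -- per-candidate bound
  have hper : ∀ x ∈ X, μ < (∑ i ∈ V x, p i) →
      ∏ i ∈ V x, (1 - q i) ≤ 1 / ((N : ℝ) * n) := by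
    intro x _ hheavy
    have h1 : ∀ i ∈ V x, 1 - q i ≤ Real.exp (-(r * p i)) := by
      intro i _
      have hmin := hq i
      rcases le_or_gt (r * p i) 1 with h | h
      · rw [min_eq_left h] at hmin
        have h2 : 1 - q i ≤ 1 - r * p i := by linarith
        have h3 := Real.add_one_le_exp (-(r * p i))
        linarith
      · rw [min_eq_right h.le] at hmin
        have : 1 - q i ≤ 0 := by linarith
        exact this.trans (Real.exp_pos _).le
    calc ∏ i ∈ V x, (1 - q i)
        ≤ ∏ i ∈ V x, Real.exp (-(r * p i)) :=
          Finset.prod_le_prod (fun i _ => by linarith [hq1 i]) h1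
      _ = Real.exp (∑ i ∈ V x, -(r * p i)) := (Real.exp_sum _ _).symm
      _ ≤ Real.exp (-(r * μ)) := by
          apply Real.exp_le_exp.mpr
          have h2 : r * μ ≤ r * ∑ i ∈ V x, p i :=
            mul_le_mul_of_nonneg_left hheavy.le hr0
          have h3 : ∑ i ∈ V x, -(r * p i) = -(r * ∑ i ∈ V x, p i) := by
            rw [Finset.mul_sum, Finset.sum_neg_distrib]
          rw [h3]
          linarith
      _ = 1 / ((N : ℝ) * n) := by
          have hrμ : r * μ = Real.log ((N : ℝ) * n) := by
            rw [hr]; field_simp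
          rw [hrμ, Real.exp_neg, Real.exp_log hNnpos, one_div]
  -- union bound: bad set ⊆ biUnion
  set Xh : Finset (Fin d → ℝ) := X.filter (fun x => μ < ∑ i ∈ V x, p i) with hXh
  have hsubset : Finset.univ.filter (fun S => ¬ P S) ⊆
      Xh.biUnion (fun x => ((V x)ᶜ).powerset) := by
    intro S hS
    simp only [Finset.mem_filter, Finset.mem_univ, true_and, hP] at hS
    push_neg at hS
    obtain ⟨x, hxX, hxheavy, hxuncaught⟩ := hS
    refine Finset.mem_biUnion.mpr ⟨x, ?_, ?_⟩
    · exact Finset.mem_filter.mpr ⟨hxX, hxheavy⟩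
    · refine Finset.mem_powerset.mpr ?_
      intro i hi
      refine Finset.mem_compl.mpr ?_
      simp only [hV, Finset.mem_filter, Finset.mem_univ, true_and]
      exact not_lt.mpr (hxuncaught i hi)
  have hbad : ∑ S ∈ Finset.univ.filter (fun S => ¬ P S), w S ≤ 1 / (n : ℝ) := by
    calc ∑ S ∈ Finset.univ.filter (fun S => ¬ P S), w S
        ≤ ∑ S ∈ Xh.biUnion (fun x => ((V x)ᶜ).powerset), w S :=
          Finset.sum_le_sum_of_subset_of_nonneg hsubset (fun S _ _ => hw0 S)
      _ ≤ ∑ x ∈ Xh, ∑ S ∈ ((V x)ᶜ).powerset, w S :=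
          aux_sum_biUnion_le _ _ _ hw0
      _ = ∑ x ∈ Xh, ∏ i ∈ V x, (1 - q i) := by
          exact Finset.sum_congr rfl fun x _ => hcond (V x)
      _ ≤ ∑ x ∈ Xh, 1 / ((N : ℝ) * n) := by
          refine Finset.sum_le_sum fun x hx => ?_
          have hx' := Finset.mem_filter.mp hx
          exact hper x hx'.1 hx'.2
      _ = (Xh.card : ℝ) * (1 / ((N : ℝ) * n)) := by
          rw [Finset.sum_const, nsmul_eq_mul]
      _ ≤ (N : ℝ) * (1 / ((N : ℝ) * n)) := by
          apply mul_le_mul_of_nonneg_right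
          · have : Xh.card ≤ N := le_trans (Finset.card_filter_le _ _) hX
            exact_mod_cast this
          · positivity
      _ = 1 / (n : ℝ) := by
          have hN0 : (N : ℝ) ≠ 0 := by positivity
          have hn0 : (n : ℝ) ≠ 0 := by
            have : (0:ℝ) < n := by exact_mod_cast hn
            exact ne_of_gt this
          field_simp
  have hsplit : ∑ S ∈ Finset.univ.filter P, w S
      + ∑ S ∈ Finset.univ.filter (fun S => ¬ P S), w S = 1 := by
    rw [Finset.sum_filter_add_sum_filter_not, htot]
  have hgoal : 1 - 1 / (n : ℝ) ≤ ∑ S ∈ Finset.univ.filter P, w S := by linarith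
  convert hgoal using 2
end

section
/- Let 0 < ε ≤ 1, let d ≥ 1 and let r_p ≥ 1 be a real number with r_p ≥ ε. There exists a finite set S ⊆ ℝ^d with |S| ≤ ⌈2 + 4·log(r_p/ε)/ε⌉^d, depending only on ε, r_p and d, with the following property: for every x ∈ [0,1]^d there exists x̃ ∈ S with x̃ ∈ [0,1]^d and x_i ≤ x̃_i ≤ (1+ε)·x_i + ε/r_p for every coordinate i ∈ [d]. In particular, for every covering matrix C with nonnegative entries and every packing matrix P with entries in [0,1] and at most r_p nonzero entries per row, if x ∈ [0,1]^d is a (1+ε)-approximation (C x ≥ 1 and P x ≤ (1+ε)·1), then the corresponding x̃ ∈ S is a (1+4ε)-approximation (C x̃ ≥ 1 and P x̃ ≤ (1+4ε)·1). -/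
open scoped Classical

/-- there is an `ε`-net `S ⊆ ℝ^d` of size at most
`⌈2 + 4 log(r_p/ε)/ε⌉^d` such that every `x ∈ [0,1]^d` has a coordinate-wise upward
rounding `xt ∈ S ∩ [0,1]^d` with `x_i ≤ xt_i ≤ (1+ε) x_i + ε/r_p`; in particular, any
`(1+ε)`-approximation of a mixed packing and covering program rounds to a
`(1+4ε)`-approximation in `S`. -/
theorem epsilon_net_for_mixed_packing_covering (d : ℕ) (hd : 1 ≤ d) (ε r_p : ℝ)
    (hε0 : 0 < ε) (hε1 : ε ≤ 1) (hrp1 : 1 ≤ r_p) (hrpε : ε ≤ r_p) :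
    ∃ S : Finset (Fin d → ℝ),
      S.card ≤ (⌈2 + 4 * Real.log (r_p / ε) / ε⌉₊) ^ d ∧
      ∀ x : Fin d → ℝ, (∀ j, 0 ≤ x j ∧ x j ≤ 1) →
        ∃ xt ∈ S, (∀ j, 0 ≤ xt j ∧ xt j ≤ 1) ∧
          (∀ j, x j ≤ xt j ∧ xt j ≤ (1 + ε) * x j + ε / r_p) ∧
          (∀ (n_c n_p : ℕ) (C : Matrix (Fin n_c) (Fin d) ℝ) (P : Matrix (Fin n_p) (Fin d) ℝ),
            (∀ i j, 0 ≤ C i j) → (∀ i j, 0 ≤ P i j) → (∀ i j, P i j ≤ 1) →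
            (∀ i, ((Finset.univ.filter (fun j => P i j ≠ 0)).card : ℝ) ≤ r_p) →
            (∀ i, 1 ≤ ∑ j, C i j * x j) → (∀ i, ∑ j, P i j * x j ≤ 1 + ε) →
            (∀ i, 1 ≤ ∑ j, C i j * xt j) ∧ (∀ i, ∑ j, P i j * xt j ≤ 1 + 4 * ε)) := by
  classical
  have hrp0 : (0:ℝ) < r_p := by linarith
  have hq0 : (0:ℝ) < r_p / ε := div_pos hrp0 hε0
  have hq1 : (1:ℝ) ≤ r_p / ε := (one_le_div hε0).2 hrpε
  have hL0 : 0 ≤ Real.log (r_p / ε) := Real.log_nonneg hq1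
  set L := Real.log (r_p / ε) with hLdef
  set N := ⌈2 + 4 * L / ε⌉₊ with hNdef
  have hNreal : 2 + 4 * L / ε ≤ (N : ℝ) := Nat.le_ceil _
  have hN2 : 2 ≤ N := by
    have h4L : (0:ℝ) ≤ 4 * L / ε := by positivity
    have : ⌈(2:ℝ)⌉₊ ≤ N := Nat.ceil_le_ceil (by linarith)
    simpa using this
  -- log (1+ε) ≥ ε/2
  have hlog : ε / 2 ≤ Real.log (1 + ε) := by
    rw [Real.le_log_iff_exp_le (by linarith)]
    have h1 : -(ε/2) + 1 ≤ Real.exp (-(ε/2)) := Real.add_one_le_exp _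
    have h2 : (0:ℝ) < 1 - ε/2 := by linarith
    have h3 : Real.exp (ε/2) = (Real.exp (-(ε/2)))⁻¹ := by
      rw [← Real.exp_neg]; ring_nf
    rw [h3]
    rw [inv_le_iff_one_le_mul₀ (Real.exp_pos _)]
    nlinarith [Real.exp_pos (-(ε/2)), h1]
  set g : ℕ → ℝ := fun k => ε / r_p * (1+ε)^k with hgdef
  set v : ℕ → ℝ := fun k => min 1 (g k) with hvdef
  have hg0 : ∀ k, 0 < g k := fun k => by positivity
  have hv0 : ∀ k, 0 < v k := fun k => lt_min one_pos (hg0 k)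
  have hv1 : ∀ k, v k ≤ 1 := fun k => min_le_left _ _
  -- g (N-1) ≥ 1
  have hgN : 1 ≤ g (N - 1) := by
    have hm : (4 * L / ε + 1 : ℝ) ≤ ((N - 1 : ℕ) : ℝ) := by
      have : ((N - 1 : ℕ) : ℝ) = (N : ℝ) - 1 := by
        rw [Nat.cast_sub (by omega)]; simp
      rw [this]; linarith
    have hpow : r_p / ε ≤ (1+ε)^(N-1) := by
      rw [← Real.exp_log hq0, ← Real.exp_log (show (0:ℝ) < (1+ε)^(N-1) by positivity)]
      apply Real.exp_le_exp.2
      rw [Real.log_pow]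
      have h1 : ((N-1:ℕ):ℝ) * (ε/2) ≤ ((N-1:ℕ):ℝ) * Real.log (1+ε) := by
        apply mul_le_mul_of_nonneg_left hlog (by positivity)
      have h2 : L ≤ ((N-1:ℕ):ℝ) * (ε/2) := by
        have hkey : (4 * L / ε + 1) * (ε/2) = 2 * L + ε/2 := by
          field_simp
          ring
        have := mul_le_mul_of_nonneg_right hm (le_of_lt (half_pos hε0))
        rw [hkey] at this
        linarith
      linarith
    calc (1:ℝ) = ε / r_p * (r_p / ε) := by field_simp
      _ ≤ ε / r_p * (1+ε)^(N-1) := by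
          apply mul_le_mul_of_nonneg_left hpow (by positivity)
  have hvN : v (N - 1) = 1 := min_eq_left hgN
  set V : Finset ℝ := (Finset.range N).image v with hVdef
  refine ⟨Fintype.piFinset (fun _ => V), ?_, ?_⟩
  · rw [Fintype.card_piFinset]
    calc ∏ _i : Fin d, V.card ≤ ∏ _i : Fin d, N := by
          apply Finset.prod_le_prod (fun _ _ => Nat.zero_le _)
          intro i _
          exact le_trans Finset.card_image_le (by simp)
      _ = N ^ d := by simp
  · intro x hx
    have hex : ∀ j : Fin d, ∃ k, x j ≤ v k := fun j => ⟨N - 1, by rw [hvN]; exact (hx j).2⟩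
    set K : Fin d → ℕ := fun j => Nat.find (hex j) with hKdef
    have hKle : ∀ j, K j < N := fun j => by
      have : K j ≤ N - 1 := Nat.find_le (by rw [hvN]; exact (hx j).2)
      omega
    set xt : Fin d → ℝ := fun j => v (K j) with hxtdef
    have hxle : ∀ j, x j ≤ xt j := fun j => Nat.find_spec (hex j)
    have hub : ∀ j, xt j ≤ (1 + ε) * x j + ε / r_p := by
      intro j
      cases hk : K j with
      | zero =>
        have : xt j = v 0 := by rw [hxtdef]; simp [hk]
        rw [this]
        have : v 0 ≤ ε / r_p := by
          simp only [hvdef, hgdef, pow_zero, mul_one]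
          exact min_le_right _ _
        nlinarith [(hx j).1]
      | succ m =>
        have hmin : ¬ x j ≤ v m := Nat.find_min (hex j) (lt_of_lt_of_le (Nat.lt_succ_self m) (le_of_eq hk.symm))
        push_neg at hmin
        have hgm : g m < x j := by
          by_contra h
          push_neg at h
          have : x j ≤ v m := le_min (hx j).2 h
          linarith
        have : xt j ≤ g (m+1) := by
          rw [hxtdef]; simp only [hk]; exact min_le_right _ _
        have hgrec : g (m+1) = (1+ε) * g m := by
          simp only [hgdef, pow_succ]; ring
        have : xt j ≤ (1+ε) * x j := by
          rw [hgrec] at this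
          nlinarith [hgm]
        nlinarith [div_pos hε0 hrp0]
    refine ⟨xt, ?_, fun j => ⟨(hv0 _).le, hv1 _⟩, fun j => ⟨hxle j, hub j⟩, ?_⟩
    · rw [Fintype.mem_piFinset]
      intro j
      exact Finset.mem_image.2 ⟨K j, Finset.mem_range.2 (hKle j), rfl⟩
    · intro n_c n_p C P hC hP0 hP1 hPcard hCx hPx
      constructor
      · intro i
        refine le_trans (hCx i) (Finset.sum_le_sum fun j _ => ?_)
        exact mul_le_mul_of_nonneg_left (hxle j) (hC i j)
      · intro i
        have h1 : ∑ j, P i j * xt j ≤ ∑ j, P i j * ((1+ε) * x j + ε / r_p) :=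
          Finset.sum_le_sum fun j _ => mul_le_mul_of_nonneg_left (hub j) (hP0 i j)
        have h2 : ∑ j, P i j * ((1+ε) * x j + ε / r_p)
            = (1+ε) * ∑ j, P i j * x j + (ε / r_p) * ∑ j, P i j := by
          rw [Finset.mul_sum, Finset.mul_sum, ← Finset.sum_add_distrib]
          apply Finset.sum_congr rfl
          intro j _; ring
        have h3 : ∑ j, P i j ≤ r_p := by
          have e1 : ∑ j ∈ Finset.univ.filter (fun j => P i j ≠ 0), P i j = ∑ j, P i j :=
            Finset.sum_filter_ne_zero _
          have e2 : ∑ j ∈ Finset.univ.filter (fun j => P i j ≠ 0), P i j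
              ≤ ((Finset.univ.filter (fun j => P i j ≠ 0)).card : ℝ) := by
            have := Finset.sum_le_card_nsmul (Finset.univ.filter (fun j => P i j ≠ 0))
              (fun j => P i j) 1 (fun j _ => hP1 i j)
            simpa using this
          linarith [hPcard i]
        have h4 : (1+ε) * ∑ j, P i j * x j ≤ (1+ε) * (1+ε) :=
          mul_le_mul_of_nonneg_left (hPx i) (by linarith)
        have h5 : (ε / r_p) * ∑ j, P i j ≤ ε := by
          have := mul_le_mul_of_nonneg_left h3 (le_of_lt (div_pos hε0 hrp0))
          calc (ε / r_p) * ∑ j, P i j ≤ (ε / r_p) * r_p := this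
            _ = ε := by field_simp
        nlinarith [h1, h2, h4, h5]
end

section
/- Let 0 < ε ≤ 1/2, T ≥ 1, let C ∈ ℝ^{n_c×d} have nonnegative entries and P ∈ ℝ^{n_p×d} have nonnegative entries, and let x_1, …, x_T ∈ ℝ^d satisfy: (i) x_j ≥ 0 and P x_j ≤ (1+ε)·1 for every j ∈ [T]; (ii) for every covering row i ∈ [n_c], the number of indices j ∈ [T] with ⟨C_{i:}, x_j⟩ < 1 is at most ε·T. Then the average x̄ = (1/T)·∑_{j=1}^T x_j satisfies C x̄ ≥ (1−ε)·1 and P x̄ ≤ (1+ε)·1, and consequently y = x̄/(1−ε) satisfies C y ≥ 1 and P y ≤ (1+4ε)·1. -/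
/-- if every iterate satisfies the packing constraints up to `1+ε` and
every covering constraint is violated by at most `ε T` iterates, then the average
satisfies `C x̄ ≥ (1-ε)·1` and `P x̄ ≤ (1+ε)·1`, and the rescaled vector
`x̄ / (1-ε)` satisfies `C y ≥ 1` and `P y ≤ (1+4ε)·1`. -/
theorem mixed_packing_covering_average (n_c n_p d T : ℕ) (hT : 1 ≤ T)
    (ε : ℝ) (hε0 : 0 < ε) (hε1 : ε ≤ 1 / 2)
    (C : Matrix (Fin n_c) (Fin d) ℝ) (hC : ∀ i j, 0 ≤ C i j)
    (P : Matrix (Fin n_p) (Fin d) ℝ) (hP : ∀ i j, 0 ≤ P i j)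
    (x : Fin T → Fin d → ℝ)
    (hx0 : ∀ j k, 0 ≤ x j k)
    (hPx : ∀ j i, ∑ k, P i k * x j k ≤ 1 + ε)
    (hviol : ∀ i, ((Finset.univ.filter (fun j => ∑ k, C i k * x j k < 1)).card : ℝ) ≤ ε * T) :
    (∀ i, 1 - ε ≤ ∑ k, C i k * ((1 / (T : ℝ)) * ∑ j, x j k)) ∧
    (∀ i, ∑ k, P i k * ((1 / (T : ℝ)) * ∑ j, x j k) ≤ 1 + ε) ∧
    (∀ i, 1 ≤ ∑ k, C i k * (((1 / (T : ℝ)) * ∑ j, x j k) / (1 - ε))) ∧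
    (∀ i, ∑ k, P i k * (((1 / (T : ℝ)) * ∑ j, x j k) / (1 - ε)) ≤ 1 + 4 * ε) := by
  have hT0 : (0 : ℝ) < (T : ℝ) := by exact_mod_cast hT
  have hTne : (T : ℝ) ≠ 0 := ne_of_gt hT0
  have h1ε : (0 : ℝ) < 1 - ε := by linarith
  have swapC : ∀ i, ∑ k, C i k * ((1 / (T : ℝ)) * ∑ j, x j k)
      = (1 / (T : ℝ)) * ∑ j, ∑ k, C i k * x j k := by
    intro i
    simp_rw [Finset.mul_sum]
    rw [Finset.sum_comm]
    exact Finset.sum_congr rfl fun j _ => Finset.sum_congr rfl fun k _ => by ring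
  have swapP : ∀ i, ∑ k, P i k * ((1 / (T : ℝ)) * ∑ j, x j k)
      = (1 / (T : ℝ)) * ∑ j, ∑ k, P i k * x j k := by
    intro i
    simp_rw [Finset.mul_sum]
    rw [Finset.sum_comm]
    exact Finset.sum_congr rfl fun j _ => Finset.sum_congr rfl fun k _ => by ring
  have hcov : ∀ i, 1 - ε ≤ ∑ k, C i k * ((1 / (T : ℝ)) * ∑ j, x j k) := by
    intro i
    rw [swapC i]
    set S := Finset.univ.filter (fun j => ∑ k, C i k * x j k < 1) with hS
    have hsum : ((T : ℝ) - S.card) ≤ ∑ j, ∑ k, C i k * x j k := by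
      have hsplit : ∑ j, ∑ k, C i k * x j k
          = ∑ j ∈ S, (∑ k, C i k * x j k) + ∑ j ∈ Sᶜ, (∑ k, C i k * x j k) := by
        rw [Finset.sum_add_sum_compl]
      have h1 : (0:ℝ) ≤ ∑ j ∈ S, (∑ k, C i k * x j k) := by
        apply Finset.sum_nonneg; intro j _
        apply Finset.sum_nonneg; intro k _
        exact mul_nonneg (hC i k) (hx0 j k)
      have h2 : ((Sᶜ : Finset (Fin T)).card : ℝ) ≤ ∑ j ∈ Sᶜ, (∑ k, C i k * x j k) := by
        calc ((Sᶜ : Finset (Fin T)).card : ℝ) = ∑ _j ∈ Sᶜ, (1:ℝ) := by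
              simp
          _ ≤ ∑ j ∈ Sᶜ, (∑ k, C i k * x j k) := by
              apply Finset.sum_le_sum; intro j hj
              have : ¬ (∑ k, C i k * x j k < 1) := by
                simpa [hS] using Finset.mem_compl.mp hj
              linarith
      have hcard : ((Sᶜ : Finset (Fin T)).card : ℝ) = (T : ℝ) - S.card := by
        have hle : S.card ≤ T := by simpa using Finset.card_le_univ S
        rw [Finset.card_compl, Fintype.card_fin, Nat.cast_sub hle]
      rw [hsplit]
      rw [hcard] at h2
      linarith
    have hS' : (S.card : ℝ) ≤ ε * T := hviol i
    have h := mul_le_mul_of_nonneg_left hsum (le_of_lt (one_div_pos.mpr hT0))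
    have key : (1:ℝ) - ε ≤ (1 / (T:ℝ)) * ((T : ℝ) - S.card) := by
      rw [mul_comm, ← div_eq_mul_one_div, sub_div, div_self hTne]
      have : (S.card:ℝ)/T ≤ ε := (div_le_iff₀ hT0).mpr (by linarith)
      linarith
    linarith
  have hpack : ∀ i, ∑ k, P i k * ((1 / (T : ℝ)) * ∑ j, x j k) ≤ 1 + ε := by
    intro i
    rw [swapP i]
    have : ∑ j, ∑ k, P i k * x j k ≤ ∑ _j : Fin T, (1 + ε) :=
      Finset.sum_le_sum (fun j _ => hPx j i)
    simp only [Finset.sum_const, Finset.card_univ, Fintype.card_fin, nsmul_eq_mul] at this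
    calc (1 / (T : ℝ)) * ∑ j, ∑ k, P i k * x j k
        ≤ (1 / (T : ℝ)) * ((T : ℝ) * (1 + ε)) :=
          mul_le_mul_of_nonneg_left this (by positivity)
      _ = 1 + ε := by field_simp
  refine ⟨hcov, hpack, ?_, ?_⟩
  · intro i
    have h := hcov i
    have heq : ∑ k, C i k * (((1 / (T : ℝ)) * ∑ j, x j k) / (1 - ε))
        = (∑ k, C i k * ((1 / (T : ℝ)) * ∑ j, x j k)) / (1 - ε) := by
      rw [Finset.sum_div]
      congr 1; ext k; ring
    rw [heq, le_div_iff₀ h1ε]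
    linarith
  · intro i
    have h := hpack i
    have heq : ∑ k, P i k * (((1 / (T : ℝ)) * ∑ j, x j k) / (1 - ε))
        = (∑ k, P i k * ((1 / (T : ℝ)) * ∑ j, x j k)) / (1 - ε) := by
      rw [Finset.sum_div]
      congr 1; ext k; ring
    rw [heq, div_le_iff₀ h1ε]
    nlinarith
end

section
/- Let s ≥ 71 and W̃ > 0 be real numbers, let W be a real number with W̃ ≤ W, and let N ≥ 0 be a real number satisfying |N − s·W/W̃| ≤ √(6·s·W/W̃). Define W̃' = (W̃/(2s))·(√(3 + 2N) − √3)². Then W̃' ≤ W ≤ 2·W̃'. -/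
set_option maxHeartbeats 1000000


/-- arithmetic core of the quantum sum-estimation procedure: if
`s ≥ 71`, `0 < W̃ ≤ W`, and `|N - s W / W̃| ≤ √(6 s W / W̃)`, then the estimator
`W̃' = (W̃ / (2s)) (√(3 + 2N) - √3)²` satisfies `W̃' ≤ W ≤ 2 W̃'`. -/
theorem estimation_sum_correct (s Wt W N : ℝ) (hs : 71 ≤ s) (hWt : 0 < Wt)
    (hW : Wt ≤ W) (hN : 0 ≤ N)
    (hconc : |N - s * W / Wt| ≤ Real.sqrt (6 * s * W / Wt)) :
    (Wt / (2 * s)) * (Real.sqrt (3 + 2 * N) - Real.sqrt 3) ^ 2 ≤ W ∧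
    W ≤ 2 * ((Wt / (2 * s)) * (Real.sqrt (3 + 2 * N) - Real.sqrt 3) ^ 2) := by
  have hs0 : (0:ℝ) < s := by linarith
  set x : ℝ := s * W / Wt with hxdef
  have hW0 : (0:ℝ) < W := lt_of_lt_of_le hWt hW
  have hx0 : 0 < x := div_pos (mul_pos hs0 hW0) hWt
  have hx71 : 71 ≤ x := by
    have : s ≤ s * W / Wt := by
      rw [le_div_iff₀ hWt]
      nlinarith
    linarith
  have habs := abs_le.mp hconc
  have h6eq : 6 * s * W / Wt = 6 * x := by rw [hxdef]; ring
  rw [h6eq] at habs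
  have hs6x : Real.sqrt (6 * x) ^ 2 = 6 * x := Real.sq_sqrt (by positivity)
  have hN1 : x - Real.sqrt (6 * x) ≤ N := by linarith [habs.1]
  have hN2 : N ≤ x + Real.sqrt (6 * x) := by linarith [habs.2]
  set a : ℝ := Real.sqrt (3 + 2 * N) with hadef
  set s3 : ℝ := Real.sqrt 3 with h3def
  set sx : ℝ := Real.sqrt x with hsxdef
  have hsx2 : sx ^ 2 = x := Real.sq_sqrt hx0.le
  have hs32 : s3 ^ 2 = 3 := Real.sq_sqrt (by norm_num)
  have hsx0 : 0 ≤ sx := Real.sqrt_nonneg _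
  have hs30 : 0 ≤ s3 := Real.sqrt_nonneg _
  have hmul36 : s3 * Real.sqrt (2 * x) = Real.sqrt (6 * x) := by
    rw [h3def, ← Real.sqrt_mul (by norm_num : (0:ℝ) ≤ 3)]
    ring_nf
  have hmul3x : s3 * sx = Real.sqrt (3 * x) := by
    rw [h3def, hsxdef, ← Real.sqrt_mul (by norm_num : (0:ℝ) ≤ 3)]
  have h3x2 : Real.sqrt (3 * x) ^ 2 = 3 * x := Real.sq_sqrt (by positivity)
  -- numeric bounds
  have hb3 : s3 ≤ 1.74 := by
    rw [h3def]; rw [show (1.74:ℝ) = Real.sqrt (1.74^2) from (Real.sqrt_sq (by norm_num)).symm]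
    exact Real.sqrt_le_sqrt (by norm_num)
  have hb6x : Real.sqrt (6 * x) = Real.sqrt 6 * sx := by
    rw [hsxdef, ← Real.sqrt_mul (by norm_num : (0:ℝ) ≤ 6)]
  have hb3x : Real.sqrt (3 * x) = Real.sqrt 3 * sx := by
    rw [hsxdef, ← Real.sqrt_mul (by norm_num : (0:ℝ) ≤ 3)]
  have hb6 : Real.sqrt 6 ≤ 2.45 := by
    rw [show (2.45:ℝ) = Real.sqrt (2.45^2) from (Real.sqrt_sq (by norm_num)).symm]
    exact Real.sqrt_le_sqrt (by norm_num)
  have hbsx : 8.4 ≤ sx := by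
    rw [hsxdef, show (8.4:ℝ) = Real.sqrt (8.4^2) from (Real.sqrt_sq (by norm_num)).symm]
    exact Real.sqrt_le_sqrt (by nlinarith)
  -- upper bound: a ≤ s3 + √(2x)
  have h2x2 : Real.sqrt (2 * x) ^ 2 = 2 * x := Real.sq_sqrt (by positivity)
  have h2x0 : 0 ≤ Real.sqrt (2 * x) := Real.sqrt_nonneg _
  have hupper : a ≤ s3 + Real.sqrt (2 * x) := by
    rw [hadef, show s3 + Real.sqrt (2 * x)
        = Real.sqrt ((s3 + Real.sqrt (2 * x))^2) from
        (Real.sqrt_sq (by positivity)).symm]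
    apply Real.sqrt_le_sqrt
    nlinarith [hmul36, hN2]
  -- lower bound: s3 + sx ≤ a
  have hlower : s3 + sx ≤ a := by
    rw [hadef]
    rw [show s3 + sx = Real.sqrt ((s3 + sx)^2) from (Real.sqrt_sq (by positivity)).symm]
    apply Real.sqrt_le_sqrt
    have hkey : 2 * Real.sqrt (3 * x) + 2 * Real.sqrt (6 * x) ≤ x := by
      rw [hb6x, hb3x, ← h3def]
      nlinarith [hb3, hb6, hbsx, hsx2, hsx0, hs30, Real.sqrt_nonneg 6]
    nlinarith [hN1, hmul3x]
  have ht0 : sx ≤ a - s3 := by linarith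
  have ht2u : (a - s3) ^ 2 ≤ 2 * x := by nlinarith
  have ht2l : x ≤ (a - s3) ^ 2 := by nlinarith
  constructor
  · rw [div_mul_eq_mul_div, div_le_iff₀ (by linarith : (0:ℝ) < 2 * s)]
    have : Wt * (2 * x) = 2 * s * W := by rw [hxdef]; field_simp
    nlinarith
  · rw [← mul_assoc, show (2:ℝ) * (Wt / (2 * s)) = Wt / s from by field_simp,
      div_mul_eq_mul_div, le_div_iff₀ hs0]
    have : Wt * x = s * W := by rw [hxdef]; field_simp
    nlinarith
end
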